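/- For all a, b, a', b' ∈ ℝ with b ≠ 0 and b' ≠ 0: (b : ℂ)·exp(Complex.I·a·b) = (b' : ℂ)·exp(Complex.I·a'·b') if and only if there exists n ∈ ℤ with b' = (−1)ⁿ·b and a' = (−1)ⁿ·a + n·π/b. (This says the fibers of φ over ℂ∖{0} are exactly the orbits of the identifications T_n, so that φ₁ is injective on φ₁⁻¹(S) and (Z(R⁽¹⁾), φ₁) is a genuine resolution.) -/

import Mathlib

/-!
If `b·e^{iab} = b'·e^{ia'b'}`, then `e^{i(a'b' - ab)} = b/b'` is real, so `a'b' - ab = kπ` for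
an integer `k`, and then `b' = (-1)^k b`. The identification `T_n` corresponds to
`k = (-1)ⁿ n`, a parity-preserving involution of `ℤ`.
-/

open Complex
open scoped Real

lemma neg_one_zpow_mul_self {α : Type*} [DivisionRing α] (k : ℤ) :
    (-1 : α) ^ k * (-1) ^ k = 1 := by
  rw [← zpow_add₀ (by norm_num), ← two_mul, zpow_mul]; norm_num

lemma Complex.exp_int_mul_pi_mul_I (k : ℤ) : exp (k * π * I) = (-1) ^ k := by
  rw [mul_assoc, exp_int_mul, exp_pi_mul_I]

lemma Complex.ofReal_mul_exp_mul_I_eq_iff {r s θ ψ : ℝ} (hr : r ≠ 0) :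
    (r : ℂ) * exp (θ * I) = s * exp (ψ * I) ↔ ∃ k : ℤ, s = (-1) ^ k * r ∧ ψ = θ + k * π := by
  constructor
  · intro h
    have hs : (s : ℂ) ≠ 0 := by
      rintro hs
      rw [hs, zero_mul] at h
      exact mul_ne_zero (ofReal_ne_zero.mpr hr) (exp_ne_zero _) h
    have hquot : exp ((ψ - θ : ℝ) * I) = ((r / s : ℝ) : ℂ) := by
      push_cast
      rw [sub_mul, exp_sub, div_eq_div_iff (exp_ne_zero _) hs]
      linear_combination -h
    obtain ⟨k, hk⟩ : ∃ k : ℤ, (k : ℝ) * π = ψ - θ := by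
      rw [← Real.sin_eq_zero_iff, ← exp_ofReal_mul_I_im, hquot, ofReal_im]
    refine ⟨k, ?_, by linarith⟩
    have hψ : (ψ : ℂ) = θ + k * π := by exact_mod_cast (by linarith : ψ = θ + k * π)
    rw [hψ, add_mul, exp_add, exp_int_mul_pi_mul_I] at h
    have hr' : (r : ℂ) = s * (-1) ^ k :=
      mul_right_cancel₀ (exp_ne_zero _) (by linear_combination h)
    have : (s : ℂ) = (((-1) ^ k * r : ℝ) : ℂ) := by
      push_cast
      linear_combination -(-1 : ℂ) ^ k * hr' - s * neg_one_zpow_mul_self (α := ℂ) k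
    exact_mod_cast this
  · rintro ⟨k, rfl, rfl⟩
    push_cast
    rw [add_mul, exp_add, exp_int_mul_pi_mul_I]
    linear_combination (-(r : ℂ) * exp (θ * I)) * neg_one_zpow_mul_self (α := ℂ) k

lemma exists_neg_one_zpow_eq_and_eq_mul {α : Type*} [DivisionRing α] (k : ℤ) :
    ∃ n : ℤ, (-1 : α) ^ n = (-1) ^ k ∧ (n : α) = (-1) ^ k * k := by
  rcases Int.even_or_odd k with hk | hk
  · exact ⟨k, rfl, by rw [hk.neg_one_zpow, one_mul]⟩
  · refine ⟨-k, ?_, ?_⟩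
    · rw [hk.neg_one_zpow, hk.neg.neg_one_zpow]
    · rw [hk.neg_one_zpow, Int.cast_neg, neg_one_mul]

lemma exists_int_iff_exists_neg_one_zpow_mul {α : Type*} [DivisionRing α] (P : α → α → Prop) :
    (∃ k : ℤ, P ((-1) ^ k) k) ↔ ∃ n : ℤ, P ((-1) ^ n) ((-1) ^ n * n) := by
  constructor
  · rintro ⟨k, hk⟩
    obtain ⟨n, hsign, hn⟩ := exists_neg_one_zpow_eq_and_eq_mul (α := α) k
    refine ⟨n, ?_⟩
    rwa [hsign, hn, ← mul_assoc, neg_one_zpow_mul_self, one_mul]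
  · rintro ⟨n, hn⟩
    obtain ⟨k, hsign, hk⟩ := exists_neg_one_zpow_eq_and_eq_mul (α := α) n
    exact ⟨k, by rwa [hsign, hk]⟩

theorem phi_fibers_general (a b a' b' : ℝ) (hb : b ≠ 0) :
    (b : ℂ) * Complex.exp (Complex.I * (a : ℂ) * (b : ℂ)) =
        (b' : ℂ) * Complex.exp (Complex.I * (a' : ℂ) * (b' : ℂ)) ↔
      ∃ n : ℤ, b' = (-1 : ℝ) ^ n * b ∧ a' = (-1 : ℝ) ^ n * a + n * Real.pi / b := by
  have hangle (x y : ℝ) : I * x * y = ((x * y : ℝ) : ℂ) * I := by push_cast; ring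
  rw [hangle, hangle, ofReal_mul_exp_mul_I_eq_iff hb,
    exists_int_iff_exists_neg_one_zpow_mul fun ε m => b' = ε * b ∧ a' * b' = a * b + m * π]
  refine exists_congr fun n => and_congr_right fun hb' => ?_
  have hsign := neg_one_zpow_mul_self (α := ℝ) n
  rw [hb']
  constructor <;> intro h
  · field_simp
    linear_combination (-1 : ℝ) ^ n * h - (a' * b - n * π) * hsign
  · rw [h]
    field_simp
    linear_combination a * b * hsign

/-- The fibers of `φ(a,b) = b·exp(i·a·b)` over `ℂ∖{0}` are exactly the orbits of the
identifications `T_n(a,b) = ((−1)ⁿa + nπ/b, (−1)ⁿb)`. -/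
theorem phi_fibers (a b a' b' : ℝ) (hb : b ≠ 0) (hb' : b' ≠ 0) :
    (b : ℂ) * Complex.exp (Complex.I * (a : ℂ) * (b : ℂ)) =
        (b' : ℂ) * Complex.exp (Complex.I * (a' : ℂ) * (b' : ℂ)) ↔
      ∃ n : ℤ, b' = (-1 : ℝ) ^ n * b ∧ a' = (-1 : ℝ) ^ n * a + n * Real.pi / b :=
  phi_fibers_general a b a' b' hb
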